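/- arXiv:2310.14760 — 3 statements merged into one kernel-verified Lean document; each statement's English description precedes it below -/
import Mathlib

section
/- ω(n) = O(ln n / ln ln n), i.e. there exists a constant C such that for all n ≥ 16, ω(n) ≤ C · ln n / ln ln n. -/
/-!
If `n` has `k` distinct prime factors, at most `m` of them are below `m`, so the product of
the others gives `m ^ (k - m) ≤ n` for every `m ≥ 1`. Take `m = ⌈√(ln n)⌉`: either `k ≤ 2m`,
and then `k = O(√(ln n))`, or `k - m ≥ k / 2` and `k · ln m ≤ 2 ln n` with `ln m ≥ ½ ln ln n`.
-/

open Real Finset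

lemma Nat.pow_card_primeFactors_sub_le {n m : ℕ} (hn : n ≠ 0) (hm : 0 < m) :
    m ^ (n.primeFactors.card - m) ≤ n := by
  have hsmall : (n.primeFactors.filter (¬ m ≤ ·)).card ≤ m :=
    (card_le_card fun p hp => mem_range.2 (not_le.1 (mem_filter.1 hp).2)).trans (card_range m).le
  have hsplit := card_filter_add_card_filter_not (s := n.primeFactors) (m ≤ ·)
  set T := n.primeFactors.filter (m ≤ ·)
  have hcard : n.primeFactors.card - m ≤ T.card := by omega
  calc m ^ (n.primeFactors.card - m) ≤ m ^ T.card := Nat.pow_le_pow_right hm hcard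
    _ ≤ ∏ p ∈ T, p := pow_card_le_prod _ _ _ fun p hp => (mem_filter.1 hp).2
    _ ≤ ∏ p ∈ n.primeFactors, p := prod_le_prod_of_subset_of_one_le' (filter_subset _ _)
        fun p hp _ => (Nat.prime_of_mem_primeFactors hp).one_le
    _ ≤ n := Nat.le_of_dvd (Nat.pos_of_ne_zero hn) (Nat.prod_primeFactors_dvd n)

lemma Nat.card_primeFactors_sub_mul_log_le {n m : ℕ} (hn : n ≠ 0) (hm : 0 < m) :
    ((n.primeFactors.card : ℝ) - m) * Real.log m ≤ Real.log n := by
  calc ((n.primeFactors.card : ℝ) - m) * Real.log m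
      ≤ ((n.primeFactors.card - m : ℕ) : ℝ) * Real.log m := by
        gcongr; exact sub_le_iff_le_add.2 (by exact_mod_cast le_tsub_add)
    _ = Real.log ((m : ℝ) ^ (n.primeFactors.card - m)) := (Real.log_pow _ _).symm
    _ ≤ Real.log n := Real.log_le_log (by positivity) <| by
        exact_mod_cast pow_card_primeFactors_sub_le hn hm

lemma mul_log_le_of_forall_sub_mul_log_le {K L : ℝ} (hL : 1 < L)
    (h : ∀ m : ℕ, 0 < m → (K - m) * log m ≤ L) : K * log L ≤ 8 * L := by
  set x := √L
  have hx : 1 < x := by rw [lt_sqrt zero_le_one]; simpa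
  have hxx : x * x = L := mul_self_sqrt (by linarith)
  have hlogL : log L = 2 * log x := by rw [← hxx, log_mul (by positivity) (by positivity)]; ring
  have hlogx : log x < x := (log_le_sub_one_of_pos (by positivity)).trans_lt (by linarith)
  have hlogx0 : 0 < log x := log_pos hx
  set m := ⌈x⌉₊
  have hxm : x ≤ m := Nat.le_ceil x
  have hm2x : (m : ℝ) < 2 * x := (Nat.ceil_lt_add_one (by positivity)).trans_le (by linarith)
  rcases le_or_gt K (2 * m) with hK | hK
  · calc K * log L ≤ (2 * m) * (2 * log x) := by rw [hlogL]; gcongr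
      _ ≤ (4 * x) * (2 * x) := by nlinarith
      _ = 8 * L := by rw [← hxx]; ring
  · have hlogm : log x ≤ log m := log_le_log (by positivity) hxm
    calc K * log L = 4 * ((K / 2) * log x) := by rw [hlogL]; ring
      _ ≤ 4 * ((K - m) * log m) := by gcongr <;> linarith
      _ ≤ 4 * L := by gcongr; exact h m (Nat.ceil_pos.2 (by positivity))
      _ ≤ 8 * L := by linarith

/-- `ω(n) = O(ln n / ln ln n)`. -/
theorem omega_bigO : ∃ C : ℝ, ∀ n : ℕ, 16 ≤ n →
    (n.primeFactors.card : ℝ) ≤ C * Real.log n / Real.log (Real.log n) := by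
  refine ⟨8, fun n hn => ?_⟩
  have hL : 1 < log n := by
    have : (16 : ℝ) ≤ n := by exact_mod_cast hn
    rw [lt_log_iff_exp_lt (by positivity)]
    linarith [exp_one_lt_d9]
  rw [le_div_iff₀ (log_pos hL)]
  exact mul_log_le_of_forall_sub_mul_log_le hL fun m hm =>
    Nat.card_primeFactors_sub_mul_log_le (by omega) hm
end

section
/- For every positive integer ν ≥ 1 and real N ≥ 2, ν · π_{ν+1}(N) ≤ Σ_{p ≤ √N} π_ν(N/p), where the sum is over primes p with p² ≤ N. -/
open Finset

/-- `π_ν(N)`: the number of squarefree positive integers `n ≤ N` with exactly `ν`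
distinct prime factors. -/
noncomputable def piNu (ν : ℕ) (N : ℝ) : ℕ :=
  ((Finset.Icc 1 ⌊N⌋₊).filter (fun n => Squarefree n ∧ n.primeFactors.card = ν)).card

/-!
Double count the pairs `(p, n)` with `p` prime, `p² ≤ N`, `p ∣ n`, and `n ≤ N` squarefree with
`ν + 1` prime factors. At most one prime factor of `n` exceeds `√n`, so each `n` lies in at least
`ν` pairs; for fixed `p`, `n ↦ n / p` maps the `n` paired with `p` injectively to squarefree
`m ≤ N / p` with `ν` prime factors.
-/

namespace Nat

theorem card_primeFactors_filter_lt_sq_le_one {n : ℕ} (hn : n ≠ 0) :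
    (n.primeFactors.filter (fun p => n < p ^ 2)).card ≤ 1 := by
  refine card_le_one.mpr fun p hp q hq => ?_
  simp only [mem_filter, Nat.mem_primeFactors] at hp hq
  obtain ⟨⟨hp, hpn, -⟩, hnp⟩ := hp
  obtain ⟨⟨hq, hqn, -⟩, hnq⟩ := hq
  by_contra hpq
  have hpq_dvd : p * q ∣ n :=
    ((Nat.coprime_primes hp hq).mpr hpq).mul_dvd_of_dvd_of_dvd hpn hqn
  have hpq_le : p * q ≤ n := Nat.le_of_dvd (Nat.pos_of_ne_zero hn) hpq_dvd
  nlinarith [Nat.mul_lt_mul'' hnp hnq, Nat.mul_le_mul hpq_le hpq_le]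

theorem card_primeFactors_le_card_filter_sq_le_add_one {n : ℕ} (hn : n ≠ 0) :
    n.primeFactors.card ≤ (n.primeFactors.filter (fun p => p ^ 2 ≤ n)).card + 1 := by
  rw [← card_filter_add_card_filter_not (fun p => p ^ 2 ≤ n)]
  simpa only [not_le] using
    Nat.add_le_add_left (card_primeFactors_filter_lt_sq_le_one hn) _

theorem card_primeFactors_prime_mul {p m : ℕ} (hp : p.Prime) (h : Squarefree (p * m)) :
    (p * m).primeFactors.card = m.primeFactors.card + 1 := by
  have hpm : p.Coprime m := Nat.coprime_of_squarefree_mul h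
  rw [hpm.primeFactors_mul, card_union_of_disjoint hpm.disjoint_primeFactors,
    hp.primeFactors, card_singleton, add_comm]

end Nat

noncomputable def squarefreeWithCardPrimeFactors (ν : ℕ) (N : ℝ) : Finset ℕ :=
  (Icc 1 ⌊N⌋₊).filter (fun n => Squarefree n ∧ n.primeFactors.card = ν)

noncomputable def primesSqLe (N : ℝ) : Finset ℕ :=
  (range (⌊N⌋₊ + 1)).filter (fun p : ℕ => p.Prime ∧ ((p : ℝ)) ^ 2 ≤ N)

theorem piNu_eq_card (ν : ℕ) (N : ℝ) : piNu ν N = (squarefreeWithCardPrimeFactors ν N).card :=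
  rfl

theorem mem_squarefreeWithCardPrimeFactors {ν n : ℕ} {N : ℝ} :
    n ∈ squarefreeWithCardPrimeFactors ν N ↔
      n ≠ 0 ∧ (n : ℝ) ≤ N ∧ Squarefree n ∧ n.primeFactors.card = ν := by
  simp only [squarefreeWithCardPrimeFactors, mem_filter, mem_Icc, and_assoc]
  constructor
  · rintro ⟨hn, hnN, rest⟩
    exact ⟨by omega, (Nat.le_floor_iff' (by omega)).mp hnN, rest⟩
  · rintro ⟨hn, hnN, rest⟩
    exact ⟨by omega, (Nat.le_floor_iff' hn).mpr hnN, rest⟩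

theorem card_filter_dvd_squarefreeWithCardPrimeFactors_le {p : ℕ} (hp : p.Prime) (ν : ℕ)
    (N : ℝ) :
    ((squarefreeWithCardPrimeFactors (ν + 1) N).filter (p ∣ ·)).card ≤ piNu ν (N / p) := by
  rw [piNu_eq_card]
  refine card_le_card_of_injOn (· / p) ?_ ?_
  · intro n hn
    simp only [coe_filter, Set.mem_ofPred_eq, mem_squarefreeWithCardPrimeFactors] at hn
    obtain ⟨⟨hn, hnN, hsf, hcard⟩, m, rfl⟩ := hn
    dsimp only
    rw [mem_coe, mem_squarefreeWithCardPrimeFactors, Nat.mul_div_cancel_left m hp.pos]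
    have hp_pos : (0 : ℝ) < p := by exact_mod_cast hp.pos
    refine ⟨right_ne_zero_of_mul hn, ?_, hsf.squarefree_of_dvd (dvd_mul_left m p), ?_⟩
    · rw [le_div_iff₀ hp_pos]
      simpa [mul_comm] using hnN
    · simpa [Nat.card_primeFactors_prime_mul hp hsf] using hcard
  · intro a ha b hb hab
    simp only [coe_filter, Set.mem_ofPred_eq] at ha hb
    rw [← Nat.mul_div_cancel' ha.2, ← Nat.mul_div_cancel' hb.2]
    exact congrArg (p * ·) hab

theorem le_card_filter_dvd_primesSqLe {ν n : ℕ} {N : ℝ}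
    (hn : n ∈ squarefreeWithCardPrimeFactors (ν + 1) N) :
    ν ≤ ((primesSqLe N).filter (· ∣ n)).card := by
  rw [mem_squarefreeWithCardPrimeFactors] at hn
  obtain ⟨hn, hnN, -, hcard⟩ := hn
  have hsub : n.primeFactors.filter (fun p => p ^ 2 ≤ n) ⊆ (primesSqLe N).filter (· ∣ n) := by
    intro p hp
    simp only [primesSqLe, mem_filter, Nat.mem_primeFactors, mem_range] at hp ⊢
    obtain ⟨⟨hp, hpn, -⟩, hp_sq⟩ := hp
    have hp_sqN : ((p : ℝ)) ^ 2 ≤ N := le_trans (by exact_mod_cast hp_sq) hnN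
    have hpn_le : p ≤ n := Nat.le_of_dvd (Nat.pos_of_ne_zero hn) hpn
    have hpN : p ≤ ⌊N⌋₊ :=
      (Nat.le_floor_iff' hp.ne_zero).mpr (le_trans (by exact_mod_cast hpn_le) hnN)
    exact ⟨⟨Nat.lt_succ_of_le hpN, hp, hp_sqN⟩, hpn⟩
  have := Nat.card_primeFactors_le_card_filter_sq_le_add_one hn
  have := card_le_card hsub
  omega

theorem nu_mul_piNu_succ_le_general (ν : ℕ) (N : ℝ) :
    ν * piNu (ν + 1) N ≤
      ∑ p ∈ (Finset.range (⌊N⌋₊ + 1)).filter (fun p : ℕ => p.Prime ∧ ((p : ℝ)) ^ 2 ≤ N),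
        piNu ν (N / p) := by
  set S := squarefreeWithCardPrimeFactors (ν + 1) N
  change _ ≤ ∑ p ∈ primesSqLe N, _
  calc ν * piNu (ν + 1) N = ∑ _n ∈ S, ν := by
        rw [piNu_eq_card, sum_const, smul_eq_mul, mul_comm]
    _ ≤ ∑ n ∈ S, ((primesSqLe N).bipartiteAbove (fun n p => p ∣ n) n).card :=
        sum_le_sum fun n hn => le_card_filter_dvd_primesSqLe hn
    _ = ∑ p ∈ primesSqLe N, (S.bipartiteBelow (fun n p => p ∣ n) p).card :=
        sum_card_bipartiteAbove_eq_sum_card_bipartiteBelow _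
    _ ≤ ∑ p ∈ primesSqLe N, piNu ν (N / p) := sum_le_sum fun p hp =>
        card_filter_dvd_squarefreeWithCardPrimeFactors_le (mem_filter.mp hp).2.1 ν N

/-- `ν · π_{ν+1}(N) ≤ Σ_{p² ≤ N} π_ν(N/p)`. -/
theorem nu_mul_piNu_succ_le (ν : ℕ) (hν : 1 ≤ ν) (N : ℝ) (hN : 2 ≤ N) :
    ν * piNu (ν + 1) N ≤
      ∑ p ∈ (Finset.range (⌊N⌋₊ + 1)).filter (fun p : ℕ => p.Prime ∧ ((p : ℝ)) ^ 2 ≤ N),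
        piNu ν (N / p) :=
  nu_mul_piNu_succ_le_general ν N
end

section
/- There exist absolute constants A₁, A₂ > 0 such that for all integers ν ≥ 0 and all reals N > 3, π_{ν+1}(N) < (A₁ N / ln N) · (ln ln N + A₂)^ν / ν!. -/
open Finset Real

noncomputable def piNuSet (ν : ℕ) (N : ℝ) : Finset ℕ :=
  {n ∈ Icc 1 ⌊N⌋₊ | Squarefree n ∧ #n.primeFactors = ν}

theorem card_piNuSet (ν : ℕ) (N : ℝ) : #(piNuSet ν N) = piNu ν N := rfl

theorem mem_piNuSet {ν n : ℕ} {N : ℝ} :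
    n ∈ piNuSet ν N ↔ (1 ≤ n ∧ n ≤ ⌊N⌋₊) ∧ Squarefree n ∧ #n.primeFactors = ν := by
  rw [piNuSet, mem_filter, mem_Icc]

theorem natCast_le_of_mem_piNuSet {ν n : ℕ} {N : ℝ} (hn : n ∈ piNuSet ν N) : (n : ℝ) ≤ N := by
  obtain ⟨⟨hn1, hnN⟩, -⟩ := mem_piNuSet.1 hn
  exact (Nat.le_floor_iff' (by omega)).1 hnN

theorem piNuSet_one (N : ℝ) : piNuSet 1 N = Nat.primesLE ⌊N⌋₊ := by
  ext n
  rw [mem_piNuSet, Nat.mem_primesLE, ← isPrimePow_iff_card_primeFactors_eq_one,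
    ← Nat.squarefree_and_prime_pow_iff_prime]
  exact ⟨fun ⟨⟨_, hnN⟩, h⟩ => ⟨hnN, h⟩,
    fun ⟨hnN, h⟩ => ⟨⟨Nat.pos_of_ne_zero h.1.ne_zero, hnN⟩, h⟩⟩

theorem piNu_one (N : ℝ) : piNu 1 N = Nat.primeCounting ⌊N⌋₊ := by
  rw [← card_piNuSet, piNuSet_one, Nat.primesLE_card_eq_primeCounting]

theorem Nat.two_pow_card_primeFactors_le {n : ℕ} (hn : n ≠ 0) : 2 ^ #n.primeFactors ≤ n :=
  calc 2 ^ #n.primeFactors ≤ ∏ p ∈ n.primeFactors, p :=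
        pow_card_le_prod _ _ _ fun _ hp => (Nat.prime_of_mem_primeFactors hp).two_le
    _ ≤ n := Nat.le_of_dvd (Nat.pos_of_ne_zero hn) (Nat.prod_primeFactors_dvd n)

theorem piNu_eq_zero_of_lt_two_pow {ν : ℕ} {N : ℝ} (hN : N < 2 ^ ν) : piNu ν N = 0 := by
  rw [← card_piNuSet, card_eq_zero, eq_empty_iff_forall_notMem]
  rintro n hn
  obtain ⟨⟨hn1, hnN⟩, -, rfl⟩ := mem_piNuSet.1 hn
  have h := Nat.two_pow_card_primeFactors_le (n := n) (by omega)
  exact absurd (hN.trans_le' (natCast_le_of_mem_piNuSet hn)) (not_lt.2 (by exact_mod_cast h))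

theorem piNu_le {ν : ℕ} {N : ℝ} (hN : 0 ≤ N) : (piNu ν N : ℝ) ≤ N :=
  calc (piNu ν N : ℝ) ≤ #(Icc 1 ⌊N⌋₊) := by exact_mod_cast card_filter_le _ _
    _ ≤ N := by simpa using Nat.floor_le hN

theorem Nat.card_primeFactors_le_card_filter_mul_self_le_add_one (n : ℕ) :
    #n.primeFactors ≤ #{p ∈ n.primeFactors | p * p ≤ n} + 1 := by
  rcases n.primeFactors.eq_empty_or_nonempty with h | hne
  · simp [h]
  set M := n.primeFactors.max' hne
  have hM := n.primeFactors.max'_mem hne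
  have hsub : n.primeFactors.erase M ⊆ {p ∈ n.primeFactors | p * p ≤ n} := by
    intro p hp
    obtain ⟨hpM, hp⟩ := mem_erase.1 hp
    have hcop : p.Coprime M := (Nat.coprime_primes (Nat.prime_of_mem_primeFactors hp)
      (Nat.prime_of_mem_primeFactors hM)).2 hpM
    have hdvd : p * M ∣ n :=
      hcop.mul_dvd_of_dvd_of_dvd (Nat.dvd_of_mem_primeFactors hp) (Nat.dvd_of_mem_primeFactors hM)
    exact mem_filter.2 ⟨hp, (Nat.mul_le_mul_left p (le_max' _ p hp)).trans (Nat.le_of_dvd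
      (Nat.pos_of_ne_zero (Nat.mem_primeFactors.1 hp).2.2) hdvd)⟩
  have := card_le_card hsub
  rw [card_erase_of_mem hM] at this
  omega

theorem Nat.card_primeFactors_prime_mul_s7 {p m : ℕ} (hp : p.Prime) (hm : m ≠ 0) (hpm : ¬p ∣ m) :
    #(p * m).primeFactors = #m.primeFactors + 1 := by
  rw [Nat.primeFactors_mul hp.ne_zero hm, hp.primeFactors, ← insert_eq,
    card_insert_of_notMem fun h => hpm (Nat.dvd_of_mem_primeFactors h)]

theorem le_card_filter_dvd_of_mem_piNuSet {k n : ℕ} {N : ℝ} (hn : n ∈ piNuSet (k + 1) N) :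
    k ≤ #{p ∈ Nat.primesLE ⌊√N⌋₊ | p ∣ n} := by
  have hsub : {p ∈ n.primeFactors | p * p ≤ n} ⊆ {p ∈ Nat.primesLE ⌊√N⌋₊ | p ∣ n} := by
    intro p hp
    obtain ⟨hp, hpp⟩ := mem_filter.1 hp
    have hpN : ((p * p : ℕ) : ℝ) ≤ N := (Nat.cast_le.2 hpp).trans (natCast_le_of_mem_piNuSet hn)
    refine mem_filter.2 ⟨Nat.mem_primesLE.2 ⟨Nat.le_floor ?_, Nat.prime_of_mem_primeFactors hp⟩,
      Nat.dvd_of_mem_primeFactors hp⟩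
    exact le_sqrt_of_sq_le (by rw [sq]; exact_mod_cast hpN)
  have hcard := Nat.card_primeFactors_le_card_filter_mul_self_le_add_one n
  rw [(mem_piNuSet.1 hn).2.2] at hcard
  have := card_le_card hsub
  omega

theorem card_filter_dvd_le_piNu (k : ℕ) (N : ℝ) {p : ℕ} (hp : p.Prime) :
    #{n ∈ piNuSet (k + 1) N | p ∣ n} ≤ piNu k (N / p) := by
  rw [← card_piNuSet]
  refine card_le_card_of_injOn (· / p) ?_ ?_
  · intro n hn
    obtain ⟨hn, m, rfl⟩ := mem_filter.1 hn
    dsimp only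
    obtain ⟨⟨-, hmN⟩, hsq, hcard⟩ := mem_piNuSet.1 hn
    have hm : m ≠ 0 := right_ne_zero_of_mul hsq.ne_zero
    have hpm : ¬p ∣ m := fun ⟨c, hc⟩ =>
      hp.not_isUnit (hsq p ⟨c, by rw [hc, mul_assoc]⟩)
    rw [Finset.mem_coe, Nat.mul_div_cancel_left m hp.pos, mem_piNuSet, Nat.floor_div_natCast,
      Nat.le_div_iff_mul_le hp.pos, mul_comm]
    refine ⟨⟨Nat.pos_of_ne_zero hm, hmN⟩, hsq.of_mul_right, ?_⟩
    rw [Nat.card_primeFactors_prime_mul_s7 hp hm hpm] at hcard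
    omega
  · intro a ha b hb hab
    exact (Nat.div_left_inj (mem_filter.1 ha).2 (mem_filter.1 hb).2).1 hab

theorem mul_piNu_succ_le (k : ℕ) (N : ℝ) :
    k * piNu (k + 1) N ≤ ∑ p ∈ Nat.primesLE ⌊√N⌋₊, piNu k (N / p) :=
  calc k * piNu (k + 1) N = ∑ _n ∈ piNuSet (k + 1) N, k := by
        rw [sum_const, smul_eq_mul, card_piNuSet, mul_comm]
    _ ≤ ∑ n ∈ piNuSet (k + 1) N, #((Nat.primesLE ⌊√N⌋₊).bipartiteAbove (fun n p => p ∣ n) n) :=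
        sum_le_sum fun _ hn => le_card_filter_dvd_of_mem_piNuSet hn
    _ = ∑ p ∈ Nat.primesLE ⌊√N⌋₊, #((piNuSet (k + 1) N).bipartiteBelow (fun n p => p ∣ n) p) :=
        sum_card_bipartiteAbove_eq_sum_card_bipartiteBelow _
    _ ≤ ∑ p ∈ Nat.primesLE ⌊√N⌋₊, piNu k (N / p) :=
        sum_le_sum fun _ hp => card_filter_dvd_le_piNu k N (Nat.prime_of_mem_primesLE hp)

theorem Nat.div_le_factorization_factorial (n : ℕ) {p : ℕ} (hp : p.Prime) :
    n / p ≤ n.factorial.factorization p :=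
  calc n / p ≤ (p * (n / p)).factorial.factorization p := by
        rw [Nat.factorization_factorial_mul hp]; omega
    _ ≤ n.factorial.factorization p :=
        (Nat.factorization_le_iff_dvd (Nat.factorial_ne_zero _) (Nat.factorial_ne_zero _)).2
          (Nat.factorial_dvd_factorial (Nat.mul_div_le n p)) p

theorem Nat.primeFactors_factorial (n : ℕ) : n.factorial.primeFactors = Nat.primesLE n := by
  ext p
  rw [Nat.mem_primeFactors, Nat.mem_primesLE]
  exact ⟨fun ⟨hp, hpn, _⟩ => ⟨(hp.dvd_factorial).1 hpn, hp⟩,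
    fun ⟨hpn, hp⟩ => ⟨hp, hp.dvd_factorial.2 hpn, Nat.factorial_ne_zero n⟩⟩

theorem sum_primesLE_div_mul_log_le_log_factorial (n : ℕ) :
    ∑ p ∈ Nat.primesLE n, ((n / p : ℕ) : ℝ) * log p ≤ log n.factorial := by
  rw [log_nat_eq_sum_factorization, Finsupp.sum, Nat.support_factorization,
    Nat.primeFactors_factorial]
  refine sum_le_sum fun p hp => mul_le_mul_of_nonneg_right ?_ (log_natCast_nonneg p)
  exact_mod_cast Nat.div_le_factorization_factorial n (Nat.prime_of_mem_primesLE hp)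

theorem sum_primesLE_log_div_le (n : ℕ) :
    ∑ p ∈ Nat.primesLE n, log p / p ≤ log n + log 4 := by
  rcases n.eq_zero_or_pos with rfl | hn
  · simp [log_nonneg]
  have hn' : (0 : ℝ) < n := by exact_mod_cast hn
  have hfloor : ∀ p ∈ Nat.primesLE n, (n : ℝ) / p * log p ≤ ((n / p : ℕ) + 1) * log p := by
    intro p _
    refine mul_le_mul_of_nonneg_right ?_ (log_natCast_nonneg p)
    rw [← Nat.floor_div_eq_div (K := ℝ)]
    exact (Nat.lt_floor_add_one _).le
  have htheta : ∑ p ∈ Nat.primesLE n, log p ≤ log 4 * n := by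
    rw [← Chebyshev.theta_eq_sum_primesLE_log]
    exact Chebyshev.theta_le_log4_mul_x hn'.le
  have hfact : log n.factorial ≤ n * log n := by
    rw [← log_pow]
    exact log_le_log (by exact_mod_cast n.factorial_pos) (by exact_mod_cast n.factorial_le_pow)
  suffices n * ∑ p ∈ Nat.primesLE n, log p / p ≤ n * (log n + log 4) from
    le_of_mul_le_mul_left this hn'
  calc n * ∑ p ∈ Nat.primesLE n, log p / p = ∑ p ∈ Nat.primesLE n, (n : ℝ) / p * log p := by
        rw [mul_sum]; exact sum_congr rfl fun p _ => by ring
    _ ≤ ∑ p ∈ Nat.primesLE n, ((n / p : ℕ) + 1) * log p := sum_le_sum hfloor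
    _ = ∑ p ∈ Nat.primesLE n, ((n / p : ℕ) : ℝ) * log p + ∑ p ∈ Nat.primesLE n, log p := by
        rw [← sum_add_distrib]; exact sum_congr rfl fun p _ => by ring
    _ ≤ n * (log n + log 4) := by
        linarith [sum_primesLE_div_mul_log_le_log_factorial n]

theorem sum_primesLE_succ (f : ℕ → ℝ) (n : ℕ) :
    ∑ p ∈ Nat.primesLE (n + 1), f p =
      ∑ p ∈ Nat.primesLE n, f p + if (n + 1).Prime then f (n + 1) else 0 := by
  rw [Nat.primesLE_succ]
  split_ifs
  · rw [sum_insert (Nat.notMem_primesLE n), add_comm]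
  · rw [add_zero]

theorem mul_inv_sub_inv_le {a b c t : ℝ} (ha : 0 < a) (hab : a ≤ b) (ht : t ≤ a + c) :
    t * (a⁻¹ - b⁻¹) ≤ log b - log a + (c / a - c / b) := by
  have hb : 0 < b := ha.trans_le hab
  have hlog : 1 - a / b ≤ log b - log a := by
    rw [← log_div hb.ne' ha.ne', ← inv_div]
    exact one_sub_inv_le_log_of_pos (div_pos hb ha)
  calc t * (a⁻¹ - b⁻¹) ≤ (a + c) * (a⁻¹ - b⁻¹) :=
        mul_le_mul_of_nonneg_right ht (sub_nonneg.2 (inv_anti₀ ha hab))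
    _ = 1 - a / b + (c / a - c / b) := by field_simp
    _ ≤ log b - log a + (c / a - c / b) := by linarith

/-- Partial summation with `p⁻¹ = (log p / p) / log p`: by `sum_primesLE_log_div_le`, the left
side minus the right side does not increase with `n`. -/
theorem sum_primesLE_inv_sub_le (n : ℕ) (hn : 2 ≤ n) :
    ∑ p ∈ Nat.primesLE n, (p : ℝ)⁻¹ - (∑ p ∈ Nat.primesLE n, log p / p) / log n ≤
      log (log n) - log 4 / log n + 2 - log (log 2) := by
  induction n, hn using Nat.le_induction with
  | base =>
    have : Nat.primesLE 2 = {2} := by decide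
    have hl2 : log 2 ≠ 0 := (log_pos one_lt_two).ne'
    simp only [this, sum_singleton, Nat.cast_ofNat, log_four_eq]
    field_simp
    simp
  | succ n hn ih =>
    have hn1 : (1 : ℝ) < n := by exact_mod_cast hn
    have ha : 0 < log n := log_pos hn1
    have hab : log n ≤ log (n + 1 : ℕ) := log_le_log (by linarith) (by push_cast; linarith)
    have hb : log (n + 1 : ℕ) ≠ 0 := (ha.trans_le hab).ne'
    have hstep : ∑ p ∈ Nat.primesLE (n + 1), (p : ℝ)⁻¹ -
          (∑ p ∈ Nat.primesLE (n + 1), log p / p) / log (n + 1 : ℕ) =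
        ∑ p ∈ Nat.primesLE n, (p : ℝ)⁻¹ - (∑ p ∈ Nat.primesLE n, log p / p) / log n +
          (∑ p ∈ Nat.primesLE n, log p / p) * ((log n)⁻¹ - (log (n + 1 : ℕ))⁻¹) := by
      rw [sum_primesLE_succ, sum_primesLE_succ (fun p => log p / p)]
      split_ifs <;> (field_simp; ring)
    rw [hstep]
    have := mul_inv_sub_inv_le ha hab (sum_primesLE_log_div_le n)
    linarith

theorem sum_primesLE_inv_le (n : ℕ) (hn : 2 ≤ n) :
    ∑ p ∈ Nat.primesLE n, (p : ℝ)⁻¹ ≤ log (log n) + 4 := by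
  have hlog : 0 < log n := log_pos (by exact_mod_cast hn)
  have hT : (∑ p ∈ Nat.primesLE n, log p / p) / log n ≤ 1 + log 4 / log n := by
    rw [div_le_iff₀ hlog, add_mul, one_mul, div_mul_cancel₀ _ hlog.ne']
    linarith [sum_primesLE_log_div_le n]
  have hlog2 : 1 - (log 2)⁻¹ ≤ log (log 2) := one_sub_inv_le_log_of_pos (log_pos one_lt_two)
  have hinv2 : (log 2)⁻¹ < 2 := by
    rw [inv_lt_comm₀ (log_pos one_lt_two) two_pos]; linarith [log_two_gt_d9]
  linarith [sum_primesLE_inv_sub_le n hn]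

noncomputable def hardyRamanujanBound (ν : ℕ) (N : ℝ) : ℝ :=
  5 * N / log N * (log (log N) + 6) ^ ν / (Nat.factorial ν)

theorem one_lt_log_of_three_lt {x : ℝ} (hx : 3 < x) : 1 < log x := by
  rw [lt_log_iff_exp_lt (by linarith)]
  linarith [exp_one_lt_d9]

theorem hardyRamanujanBound_pos (ν : ℕ) {N : ℝ} (hN : 3 < N) : 0 < hardyRamanujanBound ν N := by
  have hL := one_lt_log_of_three_lt hN
  have : 0 < log (log N) := log_pos hL
  unfold hardyRamanujanBound
  positivity

theorem hardyRamanujanBound_succ (ν : ℕ) (N : ℝ) :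
    (ν + 1) * hardyRamanujanBound (ν + 1) N = (log (log N) + 6) * hardyRamanujanBound ν N := by
  unfold hardyRamanujanBound
  rw [Nat.factorial_succ, Nat.cast_mul, pow_succ]
  field_simp
  push_cast
  ring

theorem sqrt_mul_log_lt {x : ℝ} (hx : 0 < x) : √x * log x < 2 * x := by
  have hs : 0 < √x := sqrt_pos.2 hx
  have : log √x < √x := (log_le_sub_one_of_pos hs).trans_lt (sub_one_lt _)
  calc √x * log x = 2 * (√x * log √x) := by rw [log_sqrt hx.le]; ring
    _ < 2 * (√x * √x) := by gcongr
    _ = 2 * x := by rw [mul_self_sqrt hx.le]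

theorem piNu_one_lt {N : ℝ} (hN : 3 < N) : (piNu 1 N : ℝ) < hardyRamanujanBound 0 N := by
  have hL : 0 < log N := by linarith [one_lt_log_of_three_lt hN]
  have hsqrt := sqrt_mul_log_lt (by linarith : 0 < N)
  have hlog4 : log 4 < 1.39 := by linarith [log_four_eq, log_two_lt_d9]
  rw [piNu_one]
  calc (Nat.primeCounting ⌊N⌋₊ : ℝ) ≤ log 4 * N / log √N + √N :=
        Chebyshev.pi_le_log4_mul_div (by linarith)
    _ = (2 * log 4 * N + √N * log N) / log N := by rw [log_sqrt (by linarith)]; field_simp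
    _ < 5 * N / log N := by gcongr; nlinarith
    _ = hardyRamanujanBound 0 N := by simp [hardyRamanujanBound]

theorem inv_sub_le_of_le_half {L a : ℝ} (hL : 0 < L) (ha : 0 ≤ a) (haL : a ≤ L / 2) :
    (L - a)⁻¹ ≤ (1 + 2 * a / L) / L := by
  rw [inv_le_iff_one_le_mul₀ (by linarith)]
  have : (1 + 2 * a / L) / L * (L - a) = 1 + a * (L - 2 * a) / L ^ 2 := by field_simp; ring
  rw [this]
  have : 0 ≤ a * (L - 2 * a) / L ^ 2 := by apply div_nonneg _ (sq_nonneg L); nlinarith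
  linarith

theorem hardyRamanujanBound_div_le (ν : ℕ) {N p : ℝ} (hN : 16 ≤ N) (hp : 1 ≤ p) (hpN : p ≤ √N) :
    hardyRamanujanBound ν (N / p) ≤ (1 + 2 * log p / log N) / p * hardyRamanujanBound ν N := by
  set L := log N
  have hN0 : 0 < N := by linarith
  have hlogp : 0 ≤ log p := log_nonneg hp
  have hlogpL : log p ≤ L / 2 := by
    rw [← log_sqrt hN0.le]; exact log_le_log (by linarith) hpN
  have hL4 : log 4 ≤ L / 2 := by
    rw [← log_sqrt hN0.le]
    exact log_le_log (by norm_num) ((le_sqrt (by norm_num) hN0.le).2 (by linarith))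
  have hlog4 : 1 < log 4 := by linarith [log_two_gt_d9, log_four_eq]
  have hdiv : log (N / p) = L - log p := log_div hN0.ne' (by linarith)
  have hLp : 0 < L - log p := by linarith
  have hLL : 0 ≤ log (L - log p) := log_nonneg (by linarith)
  have hLLle : log (L - log p) ≤ log L := log_le_log hLp (by linarith)
  have hinv := inv_sub_le_of_le_half (by linarith) hlogp hlogpL
  have hweight : 0 ≤ (1 + 2 * log p / L) / L := (inv_pos.2 hLp).le.trans hinv
  unfold hardyRamanujanBound
  rw [hdiv]
  calc 5 * (N / p) / (L - log p) * (log (L - log p) + 6) ^ ν / (Nat.factorial ν)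
      = 5 * (N / p) * (L - log p)⁻¹ * (log (L - log p) + 6) ^ ν / (Nat.factorial ν) := by ring
    _ ≤ 5 * (N / p) * ((1 + 2 * log p / L) / L) * (log L + 6) ^ ν / (Nat.factorial ν) := by
        gcongr
    _ = _ := by ring

theorem sum_primesLE_floor_sqrt_le {N : ℝ} (hN : 16 ≤ N) :
    ∑ p ∈ Nat.primesLE ⌊√N⌋₊, (1 + 2 * log p / log N) / p ≤ log (log N) + 6 := by
  set n := ⌊√N⌋₊
  set L := log N
  have hN0 : 0 < N := by linarith
  have h4 : (4 : ℝ) ≤ √N := (le_sqrt (by norm_num) hN0.le).2 (by linarith)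
  have hn : 4 ≤ n := Nat.le_floor (by exact_mod_cast h4)
  have hlogn0 : 0 < log n := log_pos (by exact_mod_cast (by omega : 1 < n))
  have hlogn : log n ≤ L / 2 := by
    rw [← log_sqrt hN0.le]
    exact log_le_log (by positivity) (Nat.floor_le (sqrt_nonneg N))
  have hL4 : 2 * log 4 ≤ L := by
    have := log_le_log (by norm_num) h4
    rw [log_sqrt hN0.le] at this
    linarith
  have hL : 0 < L := by linarith [log_pos (by norm_num : (1 : ℝ) < 4)]
  have hloglog : log (log n) ≤ log L := log_le_log hlogn0 (by linarith)
  have hsplit : ∑ p ∈ Nat.primesLE n, (1 + 2 * log p / L) / p =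
      ∑ p ∈ Nat.primesLE n, (p : ℝ)⁻¹ + 2 / L * ∑ p ∈ Nat.primesLE n, log p / p := by
    rw [mul_sum, ← sum_add_distrib]
    exact sum_congr rfl fun p _ => by ring
  have hweighted : 2 / L * ∑ p ∈ Nat.primesLE n, log p / p ≤ 2 := by
    calc 2 / L * ∑ p ∈ Nat.primesLE n, log p / p ≤ 2 / L * (L / 2 + log 4) := by
          gcongr; linarith [sum_primesLE_log_div_le n]
      _ = 1 + 2 * log 4 / L := by field_simp
      _ ≤ 2 := by linarith [(div_le_one hL).2 hL4]
  linarith [sum_primesLE_inv_le n (by omega)]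

theorem piNu_add_two_lt_of_lt_sixteen (ν : ℕ) {N : ℝ} (hN : 3 < N) (hN16 : N < 16) :
    (piNu (ν + 2) N : ℝ) < hardyRamanujanBound (ν + 1) N := by
  rcases lt_or_ge ν 2 with hν | hν
  · have hL := one_lt_log_of_three_lt hN
    have hLL : 0 < log (log N) := log_pos hL
    have hL16 : log N < 16 := (log_le_sub_one_of_pos (by linarith)).trans_lt (by linarith)
    have hfac : 6 ≤ (log (log N) + 6) ^ (ν + 1) / (Nat.factorial (ν + 1)) := by
      interval_cases ν <;> norm_num [Nat.factorial] <;> nlinarith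
    refine (piNu_le (by linarith)).trans_lt ?_
    rw [hardyRamanujanBound, mul_div_assoc, div_mul_eq_mul_div, lt_div_iff₀ (by linarith)]
    nlinarith
  · rw [piNu_eq_zero_of_lt_two_pow (hN16.trans_le ?_), Nat.cast_zero]
    · exact hardyRamanujanBound_pos _ hN
    · calc (16 : ℝ) = 2 ^ 4 := by norm_num
        _ ≤ 2 ^ (ν + 2) := pow_le_pow_right₀ (by norm_num) (by omega)

theorem piNu_add_two_lt_of_sixteen_le (ν : ℕ) {N : ℝ} (hN : 16 ≤ N)
    (ih : ∀ M : ℝ, 3 < M → (piNu (ν + 1) M : ℝ) < hardyRamanujanBound ν M) :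
    (piNu (ν + 2) N : ℝ) < hardyRamanujanBound (ν + 1) N := by
  set P := Nat.primesLE ⌊√N⌋₊
  have hN0 : 0 < N := by linarith
  have h4 : (4 : ℝ) ≤ √N := (le_sqrt (by norm_num) hN0.le).2 (by linarith)
  have hP : P.Nonempty :=
    ⟨2, Nat.mem_primesLE.2 ⟨Nat.le_floor (by push_cast; linarith), Nat.prime_two⟩⟩
  have hterm : ∀ p ∈ P, (piNu (ν + 1) (N / p) : ℝ) <
      (1 + 2 * log p / log N) / p * hardyRamanujanBound ν N := by
    intro p hp
    have hpN : (p : ℝ) ≤ √N := (Nat.le_floor_iff (sqrt_nonneg N)).1 (Nat.le_of_mem_primesLE hp)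
    have hp1 : (1 : ℝ) ≤ p := by exact_mod_cast (Nat.one_lt_of_mem_primesLE hp).le
    refine (ih _ ?_).trans_le (hardyRamanujanBound_div_le ν hN hp1 hpN)
    calc (3 : ℝ) < √N := by linarith
      _ = N / √N := (div_sqrt).symm
      _ ≤ N / p := div_le_div_of_nonneg_left hN0.le (by linarith) hpN
  have hmul : (ν + 1 : ℝ) * piNu (ν + 2) N < (ν + 1) * hardyRamanujanBound (ν + 1) N :=
    calc (ν + 1 : ℝ) * piNu (ν + 2) N ≤ ∑ p ∈ P, (piNu (ν + 1) (N / p) : ℝ) := by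
          exact_mod_cast mul_piNu_succ_le (ν + 1) N
      _ < ∑ p ∈ P, (1 + 2 * log p / log N) / p * hardyRamanujanBound ν N :=
          sum_lt_sum_of_nonempty hP hterm
      _ = (∑ p ∈ P, (1 + 2 * log p / log N) / p) * hardyRamanujanBound ν N := (sum_mul ..).symm
      _ ≤ (log (log N) + 6) * hardyRamanujanBound ν N :=
          mul_le_mul_of_nonneg_right (sum_primesLE_floor_sqrt_le hN)
            (hardyRamanujanBound_pos ν (by linarith)).le
      _ = (ν + 1) * hardyRamanujanBound (ν + 1) N := (hardyRamanujanBound_succ ν N).symm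
  exact lt_of_mul_lt_mul_left hmul (by positivity)

theorem piNu_succ_lt_hardyRamanujanBound (ν : ℕ) {N : ℝ} (hN : 3 < N) :
    (piNu (ν + 1) N : ℝ) < hardyRamanujanBound ν N := by
  induction ν generalizing N with
  | zero => exact piNu_one_lt hN
  | succ ν ih =>
    rcases lt_or_ge N 16 with hN16 | hN16
    · exact piNu_add_two_lt_of_lt_sixteen ν hN hN16
    · exact piNu_add_two_lt_of_sixteen_le ν hN16 fun _ hM => ih hM

/-- Hardy–Ramanujan bound for squarefree numbers: there are absolute constants `A₁, A₂`
with `π_{ν+1}(N) < (A₁ N / ln N) (ln ln N + A₂)^ν / ν!` for all `ν ≥ 0`, `N > 3`. -/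
theorem piNu_lt : ∃ A₁ A₂ : ℝ, 0 < A₁ ∧ 0 < A₂ ∧ ∀ (ν : ℕ) (N : ℝ), 3 < N →
    (piNu (ν + 1) N : ℝ) <
      A₁ * N / Real.log N * (Real.log (Real.log N) + A₂) ^ ν / (Nat.factorial ν) :=
  ⟨5, 6, by norm_num, by norm_num, fun ν _ hN => piNu_succ_lt_hardyRamanujanBound ν hN⟩
end
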